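/- arXiv:0805.0825 — 3 statements merged into one kernel-verified Lean document; each statement's English description precedes it below -/
import Mathlib

section
/- Let (P_n, Q_n) be the Rudin–Shapiro polynomials (P_0 = Q_0 = 1, P_{n+1} = P_n + z^{2^n} Q_n, Q_{n+1} = P_n - z^{2^n} Q_n). Then the supremum of |P_n(z)| over the unit circle is at most 2^{(n+1)/2}. -/
open Polynomial

/-
On the unit circle `|z ^ k| = 1`, so the parallelogram law gives
`|P + z^k Q|² + |P - z^k Q|² = 2 (|P|² + |Q|²)`. Hence `|Pₙ|² + |Qₙ|² = 2ⁿ⁺¹` there,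
and `|Pₙ| ≤ √(2ⁿ⁺¹)`.
-/

theorem norm_sq_add_norm_sq_eval_add_sub_X_pow_mul (P Q : ℂ[X]) (k : ℕ) {z : ℂ} (hz : ‖z‖ = 1) :
    ‖(P + X ^ k * Q).eval z‖ ^ 2 + ‖(P - X ^ k * Q).eval z‖ ^ 2
      = 2 * (‖P.eval z‖ ^ 2 + ‖Q.eval z‖ ^ 2) := by
  have hzQ : ‖z ^ k * Q.eval z‖ = ‖Q.eval z‖ := by simp [hz]
  simp only [eval_add, eval_sub, eval_mul, eval_pow, eval_X]
  rw [parallelogram_law_with_norm ℝ, hzQ]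

theorem rudinShapiro_norm_sq_add_norm_sq (P Q : ℕ → ℂ[X])
    (hP0 : P 0 = 1) (hQ0 : Q 0 = 1)
    (hP : ∀ n, P (n + 1) = P n + X ^ (2 ^ n) * Q n)
    (hQ : ∀ n, Q (n + 1) = P n - X ^ (2 ^ n) * Q n) (n : ℕ) {z : ℂ} (hz : ‖z‖ = 1) :
    ‖(P n).eval z‖ ^ 2 + ‖(Q n).eval z‖ ^ 2 = 2 ^ (n + 1) := by
  induction n with
  | zero => norm_num [hP0, hQ0]
  | succ n ih =>
    rw [hP, hQ, norm_sq_add_norm_sq_eval_add_sub_X_pow_mul _ _ _ hz, ih, pow_succ' 2 (n + 1)]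

theorem Real.sqrt_pow_eq_rpow {x : ℝ} (hx : 0 ≤ x) (n : ℕ) : √(x ^ n) = x ^ ((n : ℝ) / 2) := by
  rw [Real.sqrt_eq_rpow, ← Real.rpow_natCast, ← Real.rpow_mul hx, mul_one_div]

/-- Rudin–Shapiro polynomials: `sup_{|z|=1} |P n z| ≤ 2^((n+1)/2)`. -/
theorem rudin_shapiro_sup_bound
    (P Q : ℕ → Polynomial ℂ)
    (hP0 : P 0 = 1) (hQ0 : Q 0 = 1)
    (hP : ∀ n, P (n + 1) = P n + Polynomial.X ^ (2 ^ n) * Q n)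
    (hQ : ∀ n, Q (n + 1) = P n - Polynomial.X ^ (2 ^ n) * Q n) :
    ∀ (n : ℕ) (z : ℂ), ‖z‖ = 1 →
      ‖(P n).eval z‖ ≤ (2 : ℝ) ^ (((n : ℝ) + 1) / 2) := by
  intro n z hz
  have hsum := rudinShapiro_norm_sq_add_norm_sq P Q hP0 hQ0 hP hQ n hz
  calc ‖(P n).eval z‖
      ≤ √(‖(P n).eval z‖ ^ 2 + ‖(Q n).eval z‖ ^ 2) :=
        Real.le_sqrt_of_sq_le (le_add_of_nonneg_right (sq_nonneg _))
    _ = 2 ^ (((n : ℝ) + 1) / 2) := by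
        rw [hsum, Real.sqrt_pow_eq_rpow zero_le_two, Nat.cast_succ]
end

section
/- Let f(s) = Σ_{n=1}^∞ a_n n^{-s} be a Dirichlet series that is analytic and bounded on the half-plane Re s > 0 with sup norm ‖f‖_∞, and suppose the partial sums satisfy ‖S_N(f)‖_∞ ≤ C (log N) ‖f‖_∞ for all N ≥ 2 (uniformly on Re s > 0). Then for every ε > 0, the series Σ a_n n^{-s-ε} converges uniformly on the half-plane Re s > 0. -/
/-!
Write `S_N(s) = ∑_{n ≤ N} a_n n^{-s}`. Abel summation expresses `∑_{n ≤ N} a_n n^{-s-ε}` as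
`∑_{n < N} S_n(s) (n^{-ε} - (n+1)^{-ε}) + S_N(s) N^{-ε}`. Since `|S_n(s)| = O(log n)` uniformly
on `Re s > 0` and `n^{-ε} - (n+1)^{-ε} ≤ ε n^{-ε-1}`, the series converges uniformly by the
Weierstrass M-test, while the boundary term `S_N(s) N^{-ε} = O(N^{-ε} log N)` tends to `0`
uniformly.
-/

open Finset Filter Asymptotics Topology

theorem sum_Icc_smul_eq_sum_range_sub_smul_add {R M : Type*} [Ring R] [AddCommGroup M]
    [Module R M] (w : ℕ → R) (b : ℕ → M) (N : ℕ) :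
    ∑ n ∈ Icc 1 N, w n • b n =
      ∑ n ∈ range N, (w n - w (n + 1)) • ∑ k ∈ Icc 1 n, b k + w N • ∑ k ∈ Icc 1 N, b k := by
  induction N with
  | zero => simp
  | succ N ih =>
    rw [sum_Icc_succ_top (by omega), sum_range_succ, sum_Icc_succ_top (by omega), ih]
    simp only [smul_add, sub_smul]
    abel

theorem tendstoUniformlyOn_sum_Icc_smul {α 𝕜 F : Type*} [NormedField 𝕜] [NormedAddCommGroup F]
    [NormedSpace 𝕜 F] [CompleteSpace F] {w : ℕ → 𝕜} {b : ℕ → α → F} {B : ℕ → ℝ} {E : Set α}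
    (hS : ∀ n, ∀ s ∈ E, ‖∑ k ∈ Icc 1 n, b k s‖ ≤ B n)
    (hdiff : Summable fun n ↦ ‖w n - w (n + 1)‖ * B n)
    (hlast : Tendsto (fun n ↦ ‖w n‖ * B n) atTop (𝓝 0)) :
    ∃ g, TendstoUniformlyOn (fun N s ↦ ∑ n ∈ Icc 1 N, w n • b n s) g atTop E := by
  have hterm (c : 𝕜) (n : ℕ) {s : α} (hs : s ∈ E) : ‖c • ∑ k ∈ Icc 1 n, b k s‖ ≤ ‖c‖ * B n :=
    (norm_smul_le _ _).trans (mul_le_mul_of_nonneg_left (hS n s hs) (norm_nonneg _))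
  have hsum : TendstoUniformlyOn
      (fun N s ↦ ∑ n ∈ range N, (w n - w (n + 1)) • ∑ k ∈ Icc 1 n, b k s)
      (fun s ↦ ∑' n, (w n - w (n + 1)) • ∑ k ∈ Icc 1 n, b k s) atTop E :=
    tendstoUniformlyOn_tsum_nat hdiff fun n _ hs ↦ hterm _ n hs
  have hrem : TendstoUniformlyOn (fun N s ↦ w N • ∑ k ∈ Icc 1 N, b k s) 0 atTop E := by
    rw [Metric.tendstoUniformlyOn_iff]
    intro δ hδ
    filter_upwards [hlast.eventually (gt_mem_nhds hδ)] with N hN s hs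
    rw [Pi.zero_apply, dist_zero_left]
    exact (hterm _ N hs).trans_lt hN
  refine ⟨_, (hsum.add hrem).congr (Eventually.of_forall fun N s _ ↦ ?_)⟩
  exact (sum_Icc_smul_eq_sum_range_sub_smul_add w (b · s) N).symm

theorem Real.one_sub_mul_le_one_add_rpow_neg {x p : ℝ} (hx : -1 < x) (hp : 0 ≤ p) :
    1 - p * x ≤ (1 + x) ^ (-p) := by
  have hx1 : 0 < 1 + x := by linarith
  rw [Real.rpow_def_of_pos hx1]
  have hlog : Real.log (1 + x) ≤ x := by
    linarith [Real.log_le_sub_one_of_pos hx1]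
  nlinarith [Real.add_one_le_exp (Real.log (1 + x) * -p)]

theorem Real.rpow_neg_sub_rpow_neg_add_one_le {x p : ℝ} (hx : 0 < x) (hp : 0 ≤ p) :
    x ^ (-p) - (x + 1) ^ (-p) ≤ p * x ^ (-p - 1) := by
  have hsplit : (x + 1) ^ (-p) = x ^ (-p) * (1 + x⁻¹) ^ (-p) := by
    rw [← Real.mul_rpow hx.le (by positivity), mul_add, mul_one, mul_inv_cancel₀ hx.ne']
  have hpow : x ^ (-p - 1) = x ^ (-p) * x⁻¹ := by
    rw [Real.rpow_sub hx, Real.rpow_one, div_eq_mul_inv]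
  have := Real.one_sub_mul_le_one_add_rpow_neg (by linarith [inv_pos.2 hx] : -1 < x⁻¹) hp
  rw [hsplit, hpow]
  nlinarith [Real.rpow_pos_of_pos hx (-p)]

theorem Real.natCast_rpow_neg_sub_isBigO {p : ℝ} (hp : 0 ≤ p) :
    (fun n : ℕ ↦ ‖(n : ℝ) ^ (-p) - ((n + 1 : ℕ) : ℝ) ^ (-p)‖) =O[atTop]
      fun n : ℕ ↦ (n : ℝ) ^ (-p - 1) := by
  refine IsBigO.of_bound p ?_
  filter_upwards [eventually_gt_atTop 0] with n hn
  have hn' : (0 : ℝ) < n := Nat.cast_pos.2 hn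
  have hanti : ((n : ℝ) + 1) ^ (-p) ≤ (n : ℝ) ^ (-p) :=
    Real.rpow_le_rpow_of_nonpos hn' (by linarith) (by linarith)
  rw [norm_norm, Nat.cast_succ, Real.norm_of_nonneg (sub_nonneg.2 hanti),
    Real.norm_of_nonneg (Real.rpow_nonneg n.cast_nonneg _)]
  exact Real.rpow_neg_sub_rpow_neg_add_one_le hn' hp

theorem tendstoUniformlyOn_sum_Icc_natCast_rpow_neg_smul {α F : Type*} [NormedAddCommGroup F]
    [NormedSpace ℝ F] [CompleteSpace F] {b : ℕ → α → F} {B : ℕ → ℝ} {E : Set α} {δ ε : ℝ}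
    (hε : 0 ≤ ε) (hδε : δ < ε) (hS : ∀ n, ∀ s ∈ E, ‖∑ k ∈ Icc 1 n, b k s‖ ≤ B n)
    (hB : B =O[atTop] fun n : ℕ ↦ (n : ℝ) ^ δ) :
    ∃ g, TendstoUniformlyOn (fun N s ↦ ∑ n ∈ Icc (1 : ℕ) N, (n : ℝ) ^ (-ε) • b n s) g
      atTop E := by
  refine tendstoUniformlyOn_sum_Icc_smul hS ?_ ?_
  · have hO := (Real.natCast_rpow_neg_sub_isBigO hε).mul hB
    refine summable_of_isBigO_nat (Real.summable_nat_rpow.2 (by linarith : -ε - 1 + δ < -1)) ?_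
    exact hO.congr_right fun n ↦ (Real.rpow_add' n.cast_nonneg (by linarith)).symm
  · have hO := ((isBigO_refl (fun n : ℕ ↦ (n : ℝ) ^ (-ε)) atTop).norm_left).mul hB
    refine hO.trans_tendsto ?_
    have h := (tendsto_rpow_neg_atTop (sub_pos.2 hδε)).comp tendsto_natCast_atTop_atTop
    refine h.congr fun n ↦ ?_
    rw [Function.comp_apply, ← Real.rpow_add' n.cast_nonneg (by linarith)]
    ring_nf

theorem bohr_uniform_convergence_general
    (a : ℕ → ℂ) (C M : ℝ)
    (hSN : ∀ N : ℕ, 2 ≤ N → ∀ s : ℂ, 0 < s.re →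
      ‖∑ n ∈ Finset.Icc 1 N, a n * (n : ℂ) ^ (-s)‖ ≤ C * Real.log N * M) :
    ∀ ε : ℝ, 0 < ε →
      ∃ g : ℂ → ℂ,
        TendstoUniformlyOn
          (fun (N : ℕ) (s : ℂ) => ∑ n ∈ Finset.Icc 1 N, a n * (n : ℂ) ^ (-s - (ε : ℂ)))
          g atTop {s : ℂ | 0 < s.re} := by
  intro ε hε
  set B : ℕ → ℝ := fun n ↦ ‖a 1‖ + C * M * Real.log n
  have hS : ∀ n, ∀ s ∈ {s : ℂ | 0 < s.re}, ‖∑ k ∈ Icc 1 n, a k * (k : ℂ) ^ (-s)‖ ≤ B n := by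
    rintro (_ | _ | n) s hs
    · simp [B]
    · simp [B]
    · have := hSN (n + 2) (by omega) s hs
      linarith [norm_nonneg (a 1)]
  have hB : B =O[atTop] fun n : ℕ ↦ (n : ℝ) ^ (ε / 2) := by
    have hpow := tendsto_rpow_atTop (half_pos hε)
    have hconst : (fun _ : ℝ ↦ ‖a 1‖) =o[atTop] fun x : ℝ ↦ x ^ (ε / 2) :=
      isLittleO_const_left.2 (Or.inr (tendsto_norm_atTop_atTop.comp hpow))
    have hlog := (isLittleO_log_rpow_atTop (half_pos hε)).const_mul_left (C * M)
    exact ((hconst.add hlog).comp_tendsto tendsto_natCast_atTop_atTop).isBigO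
  obtain ⟨g, hg⟩ := tendstoUniformlyOn_sum_Icc_natCast_rpow_neg_smul hε.le (half_lt_self hε) hS hB
  refine ⟨g, hg.congr (Eventually.of_forall fun N s _ ↦ sum_congr rfl fun n hn ↦ ?_)⟩
  have hn : (n : ℂ) ≠ 0 := Nat.cast_ne_zero.2 (Nat.one_le_iff_ne_zero.1 (mem_Icc.1 hn).1)
  rw [Complex.real_smul, Complex.ofReal_cpow n.cast_nonneg, sub_eq_add_neg,
    Complex.cpow_add _ _ hn]
  push_cast
  ring

/-- If the partial sums of a bounded Dirichlet series satisfy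
`‖S_N(f)‖_∞ ≤ C log N ‖f‖_∞` on `Re s > 0`, then for every `ε > 0` the series
`∑ a_n n^{-s-ε}` converges uniformly on `Re s > 0`. -/
theorem bohr_uniform_convergence
    (a : ℕ → ℂ) (C M : ℝ) (hC : 0 < C) (hM : 0 ≤ M)
    (hSN : ∀ N : ℕ, 2 ≤ N → ∀ s : ℂ, 0 < s.re →
      ‖∑ n ∈ Finset.Icc 1 N, a n * (n : ℂ) ^ (-s)‖ ≤ C * Real.log N * M) :
    ∀ ε : ℝ, 0 < ε →
      ∃ g : ℂ → ℂ,
        TendstoUniformlyOn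
          (fun (N : ℕ) (s : ℂ) => ∑ n ∈ Finset.Icc 1 N, a n * (n : ℂ) ^ (-s - (ε : ℂ)))
          g atTop {s : ℂ | 0 < s.re} :=
  bohr_uniform_convergence_general a C M hSN
end

section
/- Let q ≥ 2 and d ≥ 1 be integers, and let A = (a_{ij}) be a q × q complex matrix with |a_{ij}| = 1 and A* A = qI. Define polynomials in qd variables by P_0^{(i)} = 1 for all i, and P_{k+1}^{(i)}(z) = Σ_{j=1}^q a_{ij} z_{kq+j} P_k^{(j)}(z). Then for every z with all |z_j| = 1 and every d, Σ_{i=1}^q |P_d^{(i)}(z)|^2 = q^{d+1}; in particular sup over the unit polytorus of |P_d^{(i)}| is at most q^{(d+1)/2} for each i. -/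
/-! The vector `v_k = (P_k⁽ⁱ⁾(z))ᵢ` satisfies `v_{k+1} = A (w_k ⊙ v_k)`, where
`w_k = (z_{kq+j})ⱼ` has unimodular entries. Multiplying entrywise by `w_k` preserves
`‖v‖²`, and `Aᴴ A = q • 1` multiplies it by `q`, so `‖v_d‖² = q^d ‖v_0‖² = q^{d+1}`. -/

open Matrix

namespace Matrix

variable {n R : Type*} [Fintype n] [CommRing R] [StarRing R]

theorem star_mulVec_dotProduct_mulVec_of_conjTranspose_mul_self_eq_smul [DecidableEq n]
    {A : Matrix n n R} {c : R} (hA : Aᴴ * A = c • 1) (x : n → R) :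
    star (A *ᵥ x) ⬝ᵥ (A *ᵥ x) = c * (star x ⬝ᵥ x) := by
  rw [star_mulVec, ← dotProduct_mulVec, mulVec_mulVec, hA, smul_mulVec, one_mulVec,
    dotProduct_smul, smul_eq_mul]

theorem star_mul_dotProduct_mul_of_mem_unitary {w : n → R} (hw : ∀ i, w i ∈ unitary R)
    (x : n → R) : star (w * x) ⬝ᵥ (w * x) = star x ⬝ᵥ x := by
  refine Finset.sum_congr rfl fun i _ => ?_
  simp only [Pi.star_apply, Pi.mul_apply, star_mul']
  linear_combination (star (x i) * x i) * Unitary.star_mul_self_of_mem (hw i)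

theorem star_dotProduct_self_of_mulVec_recursion [DecidableEq n]
    {A : Matrix n n R} {c : R} (hA : Aᴴ * A = c • 1) {w v : ℕ → n → R}
    (hw : ∀ k i, w k i ∈ unitary R) (hv : ∀ k, v (k + 1) = A *ᵥ (w k * v k)) (k : ℕ) :
    star (v k) ⬝ᵥ v k = c ^ k * (star (v 0) ⬝ᵥ v 0) := by
  induction k with
  | zero => rw [pow_zero, one_mul]
  | succ k ih =>
    rw [hv, star_mulVec_dotProduct_mulVec_of_conjTranspose_mul_self_eq_smul hA,
      star_mul_dotProduct_mul_of_mem_unitary (hw k), ih, pow_succ']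
    ring

end Matrix

theorem RCLike.star_dotProduct_self_eq_sum_norm_sq {n 𝕜 : Type*} [Fintype n] [RCLike 𝕜]
    (v : n → 𝕜) : star v ⬝ᵥ v = ((∑ i, ‖v i‖ ^ 2 : ℝ) : 𝕜) := by
  push_cast
  exact Finset.sum_congr rfl fun i _ => RCLike.conj_mul (v i)

theorem norm_le_rpow_of_sum_norm_sq_eq_pow {n E : Type*} [Fintype n] [SeminormedAddGroup E]
    {v : n → E} {q : ℝ} (hq : 0 ≤ q) {m : ℕ} (hv : ∑ i, ‖v i‖ ^ 2 = q ^ m) (i : n) :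
    ‖v i‖ ≤ q ^ ((m : ℝ) / 2) := by
  have hle : ‖v i‖ ^ 2 ≤ q ^ m :=
    hv ▸ Finset.single_le_sum (fun j _ => sq_nonneg ‖v j‖) (Finset.mem_univ i)
  calc ‖v i‖ = |‖v i‖| := (abs_norm _).symm
    _ ≤ √(q ^ m) := Real.abs_le_sqrt hle
    _ = q ^ ((m : ℝ) / 2) := by
      rw [Real.sqrt_eq_rpow, ← Real.rpow_natCast, ← Real.rpow_mul hq, mul_one_div]

theorem bohnenblust_hille_construction_general
    (q d : ℕ)
    (A : Matrix (Fin q) (Fin q) ℂ)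
    (hwalsh : Matrix.conjTranspose A * A = (q : ℂ) • (1 : Matrix (Fin q) (Fin q) ℂ))
    (P : ℕ → Fin q → (ℕ → ℂ) → ℂ)
    (hP0 : ∀ i z, P 0 i z = 1)
    (hPrec : ∀ k i z, P (k + 1) i z = ∑ j : Fin q, A i j * z (k * q + (j : ℕ)) * P k j z) :
    ∀ z : ℕ → ℂ, (∀ m, ‖z m‖ = 1) →
      (∑ i : Fin q, ‖P d i z‖ ^ 2 = (q : ℝ) ^ (d + 1)) ∧
      ∀ i : Fin q, ‖P d i z‖ ≤ (q : ℝ) ^ (((d : ℝ) + 1) / 2) := by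
  intro z hz
  have hunit : ∀ (k : ℕ) (j : Fin q), z (k * q + j) ∈ unitary ℂ := fun k j =>
    Unitary.mem_iff_star_mul_self.mpr (by rw [RCLike.star_def, RCLike.conj_mul, hz]; norm_num)
  have hstep : ∀ k, (fun i => P (k + 1) i z) =
      A *ᵥ ((fun j : Fin q => z (k * q + j)) * fun j => P k j z) := fun k =>
    funext fun i => by simp only [hPrec, mulVec, dotProduct, Pi.mul_apply, mul_assoc]
  have hsum : ∑ i, ‖P d i z‖ ^ 2 = (q : ℝ) ^ (d + 1) := by
    have h := star_dotProduct_self_of_mulVec_recursion (v := fun k i => P k i z)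
      hwalsh hunit hstep d
    have h0 : (fun i => P 0 i z) = 1 := funext fun i => hP0 i z
    rw [h0, star_one, one_dotProduct_one, Fintype.card_fin, ← pow_succ,
      RCLike.star_dotProduct_self_eq_sum_norm_sq] at h
    exact_mod_cast RCLike.ofReal_injective (K := ℂ) (by simpa using h)
  refine ⟨hsum, fun i => ?_⟩
  simpa using norm_le_rpow_of_sum_norm_sq_eq_pow q.cast_nonneg hsum i

/-- The Bohnenblust–Hille construction: starting from `P₀⁽ⁱ⁾ = 1` and
`P_{k+1}⁽ⁱ⁾(z) = ∑_j a_{ij} z_{kq+j} P_k⁽ʲ⁾(z)` for a Walsh matrix `A` of size `q`,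
one has `∑_i |P_d⁽ⁱ⁾(z)|² = q^{d+1}` on the unit polytorus, hence
`|P_d⁽ⁱ⁾(z)| ≤ q^{(d+1)/2}` there. -/
theorem bohnenblust_hille_construction
    (q d : ℕ) (hq : 2 ≤ q) (hd : 1 ≤ d)
    (A : Matrix (Fin q) (Fin q) ℂ)
    (hmod : ∀ i j, ‖A i j‖ = 1)
    (hwalsh : Matrix.conjTranspose A * A = (q : ℂ) • (1 : Matrix (Fin q) (Fin q) ℂ))
    (P : ℕ → Fin q → (ℕ → ℂ) → ℂ)
    (hP0 : ∀ i z, P 0 i z = 1)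
    (hPrec : ∀ k i z, P (k + 1) i z = ∑ j : Fin q, A i j * z (k * q + (j : ℕ)) * P k j z) :
    ∀ z : ℕ → ℂ, (∀ m, ‖z m‖ = 1) →
      (∑ i : Fin q, ‖P d i z‖ ^ 2 = (q : ℝ) ^ (d + 1)) ∧
      ∀ i : Fin q, ‖P d i z‖ ≤ (q : ℝ) ^ (((d : ℝ) + 1) / 2) :=
  bohnenblust_hille_construction_general q d A hwalsh P hP0 hPrec
end
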